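/- Let T be a tree with a least element (a single root), let U be an ultrafilter on Treealg T, and let C = {t ∈ T : T↑t ∈ U} be its corresponding initial chain. Let imm(C) be the set of immediate successors of C, i.e., the minimal elements of {s ∈ T : s > c for all c ∈ C}, and let μ = |imm(C)|. Then (U,⊇) ≡_T (cf C × ∏^w_{β<μ}{0,1}, ≤), where ∏^w_{β<μ}{0,1} is the set of finitely supported functions from μ to {0,1} ordered pointwise and the product is ordered coordinatewise. -/

import Mathlib

open Cardinal

/-- A subset `X` of a preorder is cofinal if every element has an upper bound in `X`. -/
def TCofinal {P : Type*} [Preorder P] (X : Set P) : Prop :=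
  ∀ p : P, ∃ x ∈ X, p ≤ x

/-- A map is cofinal if it sends cofinal sets to cofinal sets. -/
def TCofinalMap {P Q : Type*} [Preorder P] [Preorder Q] (f : P → Q) : Prop :=
  ∀ X : Set P, TCofinal X → TCofinal (f '' X)

/-- `P ≤_T Q`: there is a cofinal map from `Q` to `P`. -/
def TukeyLE (P Q : Type*) [Preorder P] [Preorder Q] : Prop :=
  ∃ f : Q → P, TCofinalMap f

/-- Tukey equivalence. -/
def TukeyEquiv (P Q : Type*) [Preorder P] [Preorder Q] : Prop :=
  TukeyLE P Q ∧ TukeyLE Q P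

/-- An ultrafilter on a Boolean algebra `B` of subsets of `X` (a field of sets):
a subset of `B` omitting `∅`, closed under intersection, upward closed in `B`, and
containing `s` or `sᶜ` for each `s ∈ B`; regarded as the partial order `(U,⊇)`. -/
structure SetUltrafilter {X : Type*} (B : Set (Set X)) where
  carrier : Set (Set X)
  subset_alg : carrier ⊆ B
  empty_not_mem : ∅ ∉ carrier
  inter_mem : ∀ a ∈ carrier, ∀ b ∈ carrier, a ∩ b ∈ carrier
  up_closed : ∀ a ∈ carrier, ∀ b ∈ B, a ⊆ b → b ∈ carrier
  mem_or_compl_mem : ∀ b ∈ B, b ∈ carrier ∨ bᶜ ∈ carrier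

/-- The Boolean subalgebra of the powerset algebra of `X` generated by a family `G`. -/
def genBoolAlg {X : Type*} (G : Set (Set X)) : Set (Set X) :=
  ⋂₀ {B : Set (Set X) | G ⊆ B ∧ ∅ ∈ B ∧ (∀ s ∈ B, sᶜ ∈ B) ∧ (∀ s ∈ B, ∀ t ∈ B, s ∩ t ∈ B)}

/-- The (pseudo-)tree algebra of a partial order `T`: the subalgebra of the powerset
algebra of `T` generated by the cones `T↑t = {s : s ≥ t}`. -/
def treealg (T : Type*) [PartialOrder T] : Set (Set T) :=
  genBoolAlg {s : Set T | ∃ t : T, s = Set.Ici t}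

/-- The cofinality of a subset `C` of a preorder: the least cardinality of a cofinal
subset of `C`. -/
noncomputable def setCof {L : Type*} [Preorder L] (C : Set L) : Cardinal :=
  sInf {c : Cardinal | ∃ D : Set L, D ⊆ C ∧ c = #↥D ∧ ∀ x ∈ C, ∃ y ∈ D, x ≤ y}

/-- The weak product `∏^w_{i ∈ I} κ i`: finitely supported choices of an ordinal
`f i < κ i` in each coordinate, ordered pointwise. -/
def WeakProd {I : Type*} (κ : I → Cardinal) : Type _ :=
  {f : I → Ordinal // (∀ i, f i < (κ i).ord) ∧ {i | f i ≠ 0}.Finite}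

noncomputable instance {I : Type*} (κ : I → Cardinal) : PartialOrder (WeakProd κ) :=
  Subtype.partialOrder _

/-- The set of immediate successors of an initial chain `C`: the minimal elements of
`{s : s > c for all c ∈ C}`. -/
def immSucc {T : Type*} [PartialOrder T] (C : Set T) : Set T :=
  {s : T | (∀ c ∈ C, c < s) ∧ ∀ s' : T, (∀ c ∈ C, c < s') → s' ≤ s → s' = s}

/-! Every element of `U` contains a basic set `T↑c ∖ (T↑a₁ ∪ ⋯ ∪ T↑aₙ)` with `c` in the initial
chain `C` and the `aᵢ` immediate successors of `C`: this is checked on the generators of the tree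
algebra, using that the cones of incomparable nodes of a tree are disjoint. All these basic sets
belong to `U`, and one contains another exactly when the pairs `(c, {aᵢ})` compare the other way,
so `C × [imm(C)]^{<ω}` embeds cofinally into `(U, ⊇)`. It remains that a chain is Tukey
equivalent to its cofinality, enumerating a cofinal subset of size `cf C`, and that finite
subsets of `imm(C)` are the finitely supported `{0,1}`-valued functions. -/

section Tukey

variable {P Q R P' Q' : Type*} [Preorder P] [Preorder Q] [Preorder R] [Preorder P'] [Preorder Q']

theorem tcofinalMap_iff {f : Q → P} : TCofinalMap f ↔ ∀ p, ∃ q₀, ∀ q, q₀ ≤ q → p ≤ f q := by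
  refine ⟨fun hf p => ?_, fun hf X hX p => ?_⟩
  · by_contra! h
    have hX : TCofinal {q | ¬ p ≤ f q} := fun q₀ => (h q₀).imp fun _ h => ⟨h.2, h.1⟩
    obtain ⟨_, ⟨q, hq, rfl⟩, hpq⟩ := hf _ hX p
    exact hq hpq
  · obtain ⟨q₀, hq₀⟩ := hf p
    obtain ⟨x, hxX, hx⟩ := hX q₀
    exact ⟨f x, ⟨x, hxX, rfl⟩, hq₀ x hx⟩

theorem TukeyLE.trans : TukeyLE P Q → TukeyLE Q R → TukeyLE P R := by
  rintro ⟨f, hf⟩ ⟨g, hg⟩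
  refine ⟨f ∘ g, fun X hX => ?_⟩
  rw [Set.image_comp]
  exact hf _ (hg X hX)

theorem TukeyLE.prod : TukeyLE P P' → TukeyLE Q Q' → TukeyLE (P × Q) (P' × Q') := by
  rintro ⟨f, hf⟩ ⟨g, hg⟩
  refine ⟨Prod.map f g, tcofinalMap_iff.2 fun ⟨p, q⟩ => ?_⟩
  obtain ⟨p₀, hp₀⟩ := tcofinalMap_iff.1 hf p
  obtain ⟨q₀, hq₀⟩ := tcofinalMap_iff.1 hg q
  exact ⟨(p₀, q₀), fun x hx => ⟨hp₀ _ hx.1, hq₀ _ hx.2⟩⟩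

theorem TukeyEquiv.symm (h : TukeyEquiv P Q) : TukeyEquiv Q P := ⟨h.2, h.1⟩

theorem TukeyEquiv.trans (h : TukeyEquiv P Q) (h' : TukeyEquiv Q R) : TukeyEquiv P R :=
  ⟨h.1.trans h'.1, h'.2.trans h.2⟩

theorem TukeyEquiv.prod (h : TukeyEquiv P P') (h' : TukeyEquiv Q Q') :
    TukeyEquiv (P × Q) (P' × Q') :=
  ⟨h.1.prod h'.1, h.2.prod h'.2⟩

theorem TukeyEquiv.of_convergent_of_unbounded (h : P → Q)
    (hconv : ∀ q, ∃ p₀, ∀ p, p₀ ≤ p → q ≤ h p) (hunb : ∀ q, ∃ p₀, ∀ p, h p ≤ q → p ≤ p₀) :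
    TukeyEquiv P Q := by
  choose g hg using hunb
  exact ⟨⟨g, tcofinalMap_iff.2 fun p => ⟨h p, fun q hq => hg q p hq⟩⟩,
    ⟨h, tcofinalMap_iff.2 hconv⟩⟩

theorem TukeyEquiv.of_orderEmbedding (b : P ↪o Q) (hb : ∀ q, ∃ p, q ≤ b p) : TukeyEquiv P Q := by
  refine .of_convergent_of_unbounded b (fun q => ?_) (fun q => ?_)
  · obtain ⟨p₀, hp₀⟩ := hb q
    exact ⟨p₀, fun p hp => hp₀.trans (b.monotone hp)⟩
  · obtain ⟨p₀, hp₀⟩ := hb q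
    exact ⟨p₀, fun p hp => b.le_iff_le.1 (hp.trans hp₀)⟩

end Tukey

section Cofinality

variable {L : Type*} [PartialOrder L]

theorem exists_cofinal_card_eq_setCof (C : Set L) :
    ∃ D ⊆ C, #D = setCof C ∧ ∀ x ∈ C, ∃ y ∈ D, x ≤ y := by
  obtain ⟨D, hDC, hD, hDcof⟩ :=
    csInf_mem (s := {c : Cardinal | ∃ D : Set L, D ⊆ C ∧ c = #↥D ∧ ∀ x ∈ C, ∃ y ∈ D, x ≤ y})
      ⟨#C, C, subset_rfl, rfl, fun x hx => ⟨x, hx, le_rfl⟩⟩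
  exact ⟨D, hDC, hD.symm, hDcof⟩

theorem setCof_le_of_cofinal {C D : Set L} (hDC : D ⊆ C) (hD : ∀ x ∈ C, ∃ y ∈ D, x ≤ y) :
    setCof C ≤ #D :=
  csInf_le' ⟨D, hDC, rfl, hD⟩

/-- Enumerate a cofinal subset of size `cf C` along the initial ordinal of `cf C` and send each
`x ∈ C` to the first index whose point lies above `x`. -/
theorem tukeyEquiv_ord_setCof {C : Set L} (hC : IsChain (· ≤ ·) C) :
    TukeyEquiv C (setCof C).ord.ToType := by
  obtain ⟨D, hDC, hD, hDcof⟩ := exists_cofinal_card_eq_setCof C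
  obtain ⟨φ⟩ : Nonempty ((setCof C).ord.ToType ≃ D) := Cardinal.eq.1 (by rw [mk_ord_toType, hD])
  have hbound : ∀ o, ∃ y ∈ C, ∀ o' < o, (φ o' : L) < y := by
    intro o
    have hsmall : #(Subtype.val '' (φ '' Set.Iio o)) < setCof C :=
      (mk_image_le.trans mk_image_le).trans_lt (by simpa using mk_Iio_lt o)
    have hnot := mt (setCof_le_of_cofinal (by rintro _ ⟨d, -, rfl⟩; exact hDC d.2)) hsmall.not_ge
    push Not at hnot
    obtain ⟨y, hyC, hy⟩ := hnot
    refine ⟨y, hyC, fun o' ho' => ?_⟩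
    have hle := hy _ ⟨φ o', ⟨o', ho', rfl⟩, rfl⟩
    exact lt_of_le_not_ge ((hC.total hyC (hDC (φ o').2)).resolve_left hle) hle
  have hfirst : ∀ x : C, ∃ o, (x : L) ≤ φ o ∧ ∀ o', (x : L) ≤ φ o' → o ≤ o' := by
    rintro ⟨x, hx⟩
    obtain ⟨d, hdD, hxd⟩ := hDcof x hx
    obtain ⟨o, ho, hmin⟩ := wellFounded_lt.has_min {o | x ≤ φ o} ⟨φ.symm ⟨d, hdD⟩, by simpa⟩
    exact ⟨o, ho, fun o' ho' => not_lt.1 (hmin o' ho')⟩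
  choose y hyC hy using hbound
  choose h hxh hmin using hfirst
  refine .of_convergent_of_unbounded h (fun o => ⟨⟨y o, hyC o⟩, fun x hx => ?_⟩) (fun o => ?_)
  · by_contra! hlt
    exact (hy o _ hlt).not_ge ((Subtype.coe_le_coe.2 hx).trans (hxh x))
  · obtain ⟨z, hzC, hyz, hφz⟩ := hC.directedOn _ (hyC o) _ (hDC (φ o).2)
    refine ⟨⟨z, hzC⟩, fun x hx => (hxh x).trans ?_⟩
    rcases hx.lt_or_eq with hlt | heq
    · exact (hy o _ hlt).le.trans hyz
    · exact heq ▸ hφz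

end Cofinality

section WeakProd

variable {I : Type*}

theorem lt_ord_two_iff {o : Ordinal} : o < (2 : Cardinal).ord ↔ o ≤ 1 := by
  rw [ord_ofNat, Order.lt_two_iff]

open scoped Classical in
noncomputable def WeakProd.indicatorEmbedding : Finset I ↪o WeakProd (fun _ : I => 2) :=
  OrderEmbedding.ofMapLEIff
    (fun F => ⟨fun i => if i ∈ F then 1 else 0,
      fun i => lt_ord_two_iff.2 (by dsimp only; split_ifs <;> simp),
      F.finite_toSet.subset fun i hi => by by_contra h; exact hi (if_neg h)⟩)
    fun F G => by
      refine ⟨fun h i hi => ?_, fun h i => ?_⟩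
      · by_contra hG
        simpa [hi, hG] using h i
      · by_cases hF : i ∈ F
        · simp [hF, h hF]
        · simp [hF]

theorem tukeyEquiv_finset_weakProd_two : TukeyEquiv (Finset I) (WeakProd fun _ : I => 2) := by
  classical
  refine .of_orderEmbedding WeakProd.indicatorEmbedding fun w => ⟨w.2.2.toFinset, fun i => ?_⟩
  by_cases hi : w.1 i = 0
  · exact hi.trans_le zero_le
  · change w.1 i ≤ if i ∈ w.2.2.toFinset then 1 else 0
    rw [if_pos (by simpa using hi)]
    exact lt_ord_two_iff.1 (w.2.1 i)

end WeakProd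

section BoolAlg

variable {X : Type*} {G : Set (Set X)} {s t : Set X}

theorem subset_genBoolAlg : G ⊆ genBoolAlg G := fun _ hs _ hB => hB.1 hs

theorem empty_mem_genBoolAlg : ∅ ∈ genBoolAlg G := fun _ hB => hB.2.1

theorem compl_mem_genBoolAlg (hs : s ∈ genBoolAlg G) : sᶜ ∈ genBoolAlg G :=
  fun B hB => hB.2.2.1 s (hs B hB)

theorem inter_mem_genBoolAlg (hs : s ∈ genBoolAlg G) (ht : t ∈ genBoolAlg G) :
    s ∩ t ∈ genBoolAlg G :=
  fun B hB => hB.2.2.2 s (hs B hB) t (ht B hB)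

theorem univ_mem_genBoolAlg : Set.univ ∈ genBoolAlg G := by
  simpa using compl_mem_genBoolAlg (empty_mem_genBoolAlg (G := G))

@[elab_as_elim]
theorem genBoolAlg_induction {p : Set X → Prop} (basic : ∀ s ∈ G, p s) (empty : p ∅)
    (compl : ∀ s, p s → p sᶜ) (inter : ∀ s t, p s → p t → p (s ∩ t)) (hs : s ∈ genBoolAlg G) :
    p s :=
  hs {u | p u} ⟨basic, empty, compl, fun s hs t ht => inter s t hs ht⟩

end BoolAlg

namespace SetUltrafilter

variable {X : Type*} {B : Set (Set X)} (U : SetUltrafilter B) {s : Set X}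

theorem nonempty_of_mem (hs : s ∈ U.carrier) : s.Nonempty :=
  Set.nonempty_iff_ne_empty.2 fun h => U.empty_not_mem (h ▸ hs)

theorem compl_mem_of_notMem (hB : s ∈ B) (hs : s ∉ U.carrier) : sᶜ ∈ U.carrier :=
  (U.mem_or_compl_mem s hB).resolve_left hs

theorem univ_mem (h : Set.univ ∈ B) : Set.univ ∈ U.carrier :=
  (U.mem_or_compl_mem _ h).resolve_right (by simpa using U.empty_not_mem)

end SetUltrafilter

section Tree

variable {T : Type*} [PartialOrder T] {C : Set T}

def basicSet (c : T) (F : Finset T) : Set T :=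
  Set.Ici c ∩ F.inf fun a => (Set.Ici a)ᶜ

@[simp]
theorem mem_basicSet {c x : T} {F : Finset T} : x ∈ basicSet c F ↔ c ≤ x ∧ ∀ a ∈ F, ¬ a ≤ x := by
  simp [basicSet, Finset.inf_set_eq_iInter]

theorem basicSet_anti {c c' : T} {F F' : Finset T} (hc : c ≤ c') (hF : F ⊆ F') :
    basicSet c' F' ⊆ basicSet c F := fun x hx => by
  rw [mem_basicSet] at hx ⊢
  exact ⟨hc.trans hx.1, fun a ha => hx.2 a (hF ha)⟩

theorem notMem_of_mem_immSucc {a : T} (ha : a ∈ immSucc C) : a ∉ C :=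
  fun h => (ha.1 a h).false

theorem exists_mem_immSucc_le {t : T} (hwf : (Set.Iic t).WellFoundedOn (· < ·))
    (ht : ∀ c ∈ C, c < t) : ∃ a ∈ immSucc C, a ≤ t := by
  obtain ⟨a, ⟨hat, haC⟩, hmin⟩ :=
    (hwf.subset fun _ hx => hx.1 : {x | x ≤ t ∧ ∀ c ∈ C, c < x}.WellFoundedOn (· < ·))
      |>.exists_minimal ⟨t, le_rfl, ht⟩
  exact ⟨a, ⟨haC, fun s hs hsa => hsa.antisymm (hmin ⟨hsa.trans hat, hs⟩ hsa)⟩, hat⟩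

theorem basicSet_subset_basicSet_iff {c c' : T} {F F' : Finset T} (hc : c ∈ C)
    (hF : ↑F ⊆ immSucc C) (hF' : ↑F' ⊆ immSucc C) :
    basicSet c F ⊆ basicSet c' F' ↔ c' ≤ c ∧ F' ⊆ F := by
  refine ⟨fun h => ⟨?_, fun a ha => ?_⟩, fun h => basicSet_anti h.1 h.2⟩
  · have hcc : c ∈ basicSet c F :=
      mem_basicSet.2 ⟨le_rfl, fun a ha hac => ((hF ha).1 c hc).not_ge hac⟩
    exact (mem_basicSet.1 (h hcc)).1
  · by_contra haF
    -- distinct immediate successors of `C` are incomparable, so `a` avoids the cones of `F`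
    have haF : a ∈ basicSet c F := mem_basicSet.2 ⟨((hF' ha).1 c hc).le, fun b hb hba =>
      haF ((hF' ha).2 b (hF hb).1 hba ▸ hb)⟩
    exact (mem_basicSet.1 (h haF)).2 a ha le_rfl

def ContainsBasicSet (C s : Set T) : Prop :=
  ∃ c ∈ C, ∃ F : Finset T, ↑F ⊆ immSucc C ∧ basicSet c F ⊆ s

theorem ContainsBasicSet.mono {s t : Set T} (h : ContainsBasicSet C s) (hst : s ⊆ t) :
    ContainsBasicSet C t :=
  let ⟨c, hc, F, hF, hs⟩ := h
  ⟨c, hc, F, hF, hs.trans hst⟩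

theorem ContainsBasicSet.inter {s t : Set T} (hC : IsChain (· ≤ ·) C)
    (hs : ContainsBasicSet C s) (ht : ContainsBasicSet C t) : ContainsBasicSet C (s ∩ t) := by
  classical
  obtain ⟨c, hc, F, hF, hcs⟩ := hs
  obtain ⟨c', hc', F', hF', hct⟩ := ht
  obtain ⟨d, hd, hcd, hc'd⟩ := hC.directedOn c hc c' hc'
  refine ⟨d, hd, F ∪ F', by simpa using ⟨hF, hF'⟩, Set.subset_inter ?_ ?_⟩
  · exact (basicSet_anti hcd Finset.subset_union_left).trans hcs
  · exact (basicSet_anti hc'd Finset.subset_union_right).trans hct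

theorem containsBasicSet_Ici_or_compl (hchain : ∀ x : T, IsChain (· ≤ ·) (Set.Iic x)) {t : T}
    (hwf : (Set.Iic t).WellFoundedOn (· < ·)) (hlow : IsLowerSet C) (hne : C.Nonempty) :
    ContainsBasicSet C (Set.Ici t) ∨ ContainsBasicSet C (Set.Ici t)ᶜ := by
  by_cases htC : t ∈ C
  · exact .inl ⟨t, htC, ∅, by simp, fun x hx => (mem_basicSet.1 hx).1⟩
  right
  by_cases habove : ∀ c ∈ C, c < t
  · obtain ⟨a, ha, hat⟩ := exists_mem_immSucc_le hwf habove
    obtain ⟨c, hc⟩ := hne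
    refine ⟨c, hc, {a}, by simpa using ha, fun x hx htx => ?_⟩
    exact (mem_basicSet.1 hx).2 a (Finset.mem_singleton_self a) (hat.trans htx)
  · push Not at habove
    obtain ⟨c, hc, hct⟩ := habove
    -- `c` and `t` are incomparable, so their cones are disjoint in a tree
    refine ⟨c, hc, ∅, by simp, fun x hx htx => ?_⟩
    rcases (hchain x).total (mem_basicSet.1 hx).1 htx with hle | hle
    · exact hct (hle.lt_of_ne fun h => htC (h ▸ hc))
    · exact htC (hlow hle hc)

theorem containsBasicSet_or_compl (hchain : ∀ x : T, IsChain (· ≤ ·) (Set.Iic x))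
    (hwf : ∀ x : T, (Set.Iic x).WellFoundedOn (· < ·)) (hC : IsChain (· ≤ ·) C)
    (hlow : IsLowerSet C) (hne : C.Nonempty) {s : Set T} (hs : s ∈ treealg T) :
    ContainsBasicSet C s ∨ ContainsBasicSet C sᶜ := by
  refine genBoolAlg_induction ?_ ?_ (fun s h => ?_) (fun s t hs ht => ?_) hs
  · rintro _ ⟨t, rfl⟩
    exact containsBasicSet_Ici_or_compl hchain (hwf t) hlow hne
  · obtain ⟨c, hc⟩ := hne
    exact .inr ⟨c, hc, ∅, by simp, by simp⟩
  · rw [compl_compl]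
    exact h.symm
  · rcases hs with hs | hs
    · rcases ht with ht | ht
      · exact .inl (hs.inter hC ht)
      · exact .inr (ht.mono (Set.compl_subset_compl.2 Set.inter_subset_right))
    · exact .inr (hs.mono (Set.compl_subset_compl.2 Set.inter_subset_left))

end Tree

namespace SetUltrafilter

variable {T : Type*} [PartialOrder T] (U : SetUltrafilter (treealg T))

def initialChain : Set T := {t | Set.Ici t ∈ U.carrier}

theorem isLowerSet_initialChain : IsLowerSet U.initialChain := fun _ b hba ha =>
  U.up_closed _ ha _ (subset_genBoolAlg ⟨b, rfl⟩) (Set.Ici_subset_Ici.2 hba)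

theorem isChain_initialChain (hchain : ∀ x : T, IsChain (· ≤ ·) (Set.Iic x)) :
    IsChain (· ≤ ·) U.initialChain := fun _ ha _ hb _ => by
  obtain ⟨x, hax, hbx⟩ := U.nonempty_of_mem (U.inter_mem _ ha _ hb)
  exact (hchain x).total hax hbx

theorem bot_mem_initialChain [OrderBot T] : ⊥ ∈ U.initialChain := by
  simpa [initialChain] using U.univ_mem univ_mem_genBoolAlg

theorem basicSet_mem {c : T} {F : Finset T} (hc : c ∈ U.initialChain)
    (hF : ↑F ⊆ immSucc U.initialChain) : basicSet c F ∈ U.carrier :=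
  U.inter_mem _ hc _ <| Finset.inf_induction (U.univ_mem univ_mem_genBoolAlg)
    (fun _ h _ h' => U.inter_mem _ h _ h') fun a ha =>
      U.compl_mem_of_notMem (subset_genBoolAlg ⟨a, rfl⟩)
        (notMem_of_mem_immSucc (C := U.initialChain) (hF ha))

theorem containsBasicSet_of_mem [OrderBot T] (hchain : ∀ x : T, IsChain (· ≤ ·) (Set.Iic x))
    (hwf : ∀ x : T, (Set.Iic x).WellFoundedOn (· < ·)) {u : Set T} (hu : u ∈ U.carrier) :
    ContainsBasicSet U.initialChain u := by
  refine (containsBasicSet_or_compl hchain hwf (U.isChain_initialChain hchain)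
    U.isLowerSet_initialChain ⟨⊥, U.bot_mem_initialChain⟩ (U.subset_alg hu)).resolve_right ?_
  rintro ⟨c, hc, F, hF, hsub⟩
  obtain ⟨x, hx, hxu⟩ := U.nonempty_of_mem (U.inter_mem _ (U.basicSet_mem hc hF) _ hu)
  exact hsub hx hxu

def basicSetEmbedding :
    U.initialChain × Finset (immSucc U.initialChain) ↪o (U.carrier)ᵒᵈ :=
  OrderEmbedding.ofMapLEIff
    (fun p => OrderDual.toDual
      ⟨basicSet p.1 (p.2.map (.subtype _)), U.basicSet_mem p.1.2 (by simp)⟩)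
    fun p q =>
      (basicSet_subset_basicSet_iff q.1.2 (by simp) (by simp)).trans (by simp [Prod.le_def])

theorem tukeyEquiv_initialChain_prod [OrderBot T]
    (hchain : ∀ x : T, IsChain (· ≤ ·) (Set.Iic x))
    (hwf : ∀ x : T, (Set.Iic x).WellFoundedOn (· < ·)) :
    TukeyEquiv (U.initialChain × Finset (immSucc U.initialChain)) (U.carrier)ᵒᵈ := by
  classical
  refine .of_orderEmbedding U.basicSetEmbedding fun u => ?_
  obtain ⟨c, hc, F, hF, hsub⟩ := U.containsBasicSet_of_mem hchain hwf (OrderDual.ofDual u).2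
  refine ⟨(⟨c, hc⟩, F.subtype (· ∈ immSucc _)), ?_⟩
  change basicSet c ((F.subtype _).map (.subtype _)) ⊆ _
  rwa [Finset.subtype_map_of_mem hF]

end SetUltrafilter

/-- Let `T` be a tree with a least element, `U` an ultrafilter on
`Treealg T` with corresponding initial chain `C = {t : T↑t ∈ U}`, and `imm(C)` the set
of immediate successors of `C`.  Then
`(U,⊇) ≡_T (cf C × ∏^w_{β<|imm(C)|}{0,1}, ≤)`, where the weak product (indexed here by
`imm(C)` itself) consists of finitely supported `{0,1}`-valued functions ordered
pointwise and the product is ordered coordinatewise. -/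
theorem stmt12 {T : Type*} [PartialOrder T] [OrderBot T]
    (htree : ∀ t : T, IsChain (· ≤ ·) {s : T | s ≤ t} ∧
      {s : T | s ≤ t}.WellFoundedOn (· < ·))
    (U : SetUltrafilter (treealg T)) :
    TukeyEquiv ((↥U.carrier)ᵒᵈ)
      ((setCof {t : T | Set.Ici t ∈ U.carrier}).ord.ToType ×
        WeakProd (fun _ : ↥(immSucc {t : T | Set.Ici t ∈ U.carrier}) => 2)) :=
  (U.tukeyEquiv_initialChain_prod (fun t => (htree t).1) fun t => (htree t).2).symm.trans <|
    (tukeyEquiv_ord_setCof (U.isChain_initialChain fun t => (htree t).1)).prod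
      tukeyEquiv_finset_weakProd_two
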